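/- Let K, W1, W3 be random variables on a probability space with values in finite nonempty sets. If H(W1 | K, W3) = 0 (W1 is a function of the pair (K, W3)) and I(W1 ; W3) = 0, then H(K) ≥ H(W1). (A message W1 that is independent of W3 but computable from (K, W3) forces the key K to carry at least H(W1) bits of entropy.) -/

import Mathlib

/-! Independence gives H(W₁) = H(W₁, W₃) - H(W₃). Forgetting K, H(W₁, W₃) ≤ H(W₁, K, W₃), and the
latter equals H(K, W₃) because W₁ is determined by (K, W₃). Subadditivity H(K, W₃) ≤ H(K) + H(W₃)
finishes the chain; it is Gibbs' inequality `log x ≤ x - 1`, comparing the joint law with the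
product of its marginals. -/

open MeasureTheory ProbabilityTheory

/-- Shannon entropy (natural logarithm) of a random variable with values in a finite type,
computed from the law `μ.map X`. -/
noncomputable def ent {Ω : Type*} [MeasurableSpace Ω] {S : Type*} [Fintype S] [MeasurableSpace S]
    (μ : Measure Ω) (X : Ω → S) : ℝ :=
  ∑ s : S, Real.negMulLog ((μ.map X) {s}).toReal

/-- Conditional entropy `H(X | Y) = H(X, Y) - H(Y)`. -/
noncomputable def condEnt {Ω S T : Type*} [MeasurableSpace Ω] [Fintype S] [MeasurableSpace S]
    [Fintype T] [MeasurableSpace T] (μ : Measure Ω) (X : Ω → S) (Y : Ω → T) : ℝ :=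
  ent μ (fun ω => (X ω, Y ω)) - ent μ Y

/-- Mutual information `I(X ; Y) = H(X) + H(Y) - H(X, Y)`. -/
noncomputable def mutInfo {Ω S T : Type*} [MeasurableSpace Ω] [Fintype S] [MeasurableSpace S]
    [Fintype T] [MeasurableSpace T] (μ : Measure Ω) (X : Ω → S) (Y : Ω → T) : ℝ :=
  ent μ X + ent μ Y - ent μ (fun ω => (X ω, Y ω))

/-- Conditional mutual information `I(X ; Y | Z) = H(X | Z) + H(Y | Z) - H(X, Y | Z)`. -/
noncomputable def condMutInfo {Ω S T U : Type*} [MeasurableSpace Ω] [Fintype S] [MeasurableSpace S]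
    [Fintype T] [MeasurableSpace T] [Fintype U] [MeasurableSpace U]
    (μ : Measure Ω) (X : Ω → S) (Y : Ω → T) (Z : Ω → U) : ℝ :=
  condEnt μ X Z + condEnt μ Y Z - condEnt μ (fun ω => (X ω, Y ω)) Z

open Real Finset

lemma negMulLog_sum_le {ι : Type*} (s : Finset ι) {a : ι → ℝ} (ha : ∀ i ∈ s, 0 ≤ a i) :
    negMulLog (∑ i ∈ s, a i) ≤ ∑ i ∈ s, negMulLog (a i) := by
  rw [negMulLog, neg_mul, sum_mul, ← sum_neg_distrib]
  refine sum_le_sum fun i hi => ?_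
  rcases (ha i hi).eq_or_lt with h0 | h0
  · simp [← h0]
  · rw [negMulLog, neg_mul, neg_le_neg_iff]
    exact mul_le_mul_of_nonneg_left (log_le_log h0 (single_le_sum ha hi)) h0.le

lemma negMulLog_le_neg_mul_log_add_sub {q r : ℝ} (hq : 0 < q) (hr : 0 < r) :
    negMulLog q ≤ -(q * log r) + (r - q) := by
  have h := mul_le_mul_of_nonneg_left (log_le_sub_one_of_pos (div_pos hr hq)) hq.le
  rw [log_div hr.ne' hq.ne', mul_sub, mul_sub, mul_div_cancel₀ r hq.ne', mul_one] at h
  rw [negMulLog, neg_mul]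
  linarith

lemma sum_negMulLog_le_add_marginals {S T : Type*} [Fintype S] [Fintype T] {q : S × T → ℝ}
    (hq : ∀ st, 0 ≤ q st) (hq1 : ∑ st, q st = 1) :
    ∑ st, negMulLog (q st) ≤ ∑ s, negMulLog (∑ t, q (s, t)) + ∑ t, negMulLog (∑ s, q (s, t)) := by
  set a : S → ℝ := fun s => ∑ t, q (s, t)
  set b : T → ℝ := fun t => ∑ s, q (s, t)
  have gibbs : ∀ s t, negMulLog (q (s, t)) ≤
      -(q (s, t) * log (a s)) + -(q (s, t) * log (b t)) + (a s * b t - q (s, t)) := by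
    intro s t
    rcases (hq (s, t)).eq_or_lt with h0 | h0
    · rw [← h0]
      simpa using mul_nonneg (sum_nonneg fun t _ => hq (s, t)) (sum_nonneg fun s _ => hq (s, t))
    · have ha0 : 0 < a s := h0.trans_le (single_le_sum (fun t _ => hq (s, t)) (mem_univ t))
      have hb0 : 0 < b t := h0.trans_le (single_le_sum (fun s _ => hq (s, t)) (mem_univ s))
      have h := negMulLog_le_neg_mul_log_add_sub h0 (mul_pos ha0 hb0)
      rwa [log_mul ha0.ne' hb0.ne', mul_add, neg_add] at h
  have hmass : ∑ s, ∑ t, (a s * b t - q (s, t)) = 0 := by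
    have hsum_a : ∑ s, a s = 1 := (Fintype.sum_prod_type q).symm.trans hq1
    have hsum_b : ∑ t, b t = 1 := (Fintype.sum_prod_type_right q).symm.trans hq1
    simp only [sum_sub_distrib]
    rw [← Fintype.sum_mul_sum, hsum_a, hsum_b, mul_one, sub_self]
  have hentX : ∑ s, ∑ t, -(q (s, t) * log (a s)) = ∑ s, negMulLog (a s) := by
    simp only [sum_neg_distrib, ← sum_mul, negMulLog, neg_mul]
    rfl
  have hentY : ∑ s, ∑ t, -(q (s, t) * log (b t)) = ∑ t, negMulLog (b t) := by
    rw [sum_comm]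
    simp only [sum_neg_distrib, ← sum_mul, negMulLog, neg_mul]
    rfl
  calc ∑ st, negMulLog (q st) = ∑ s, ∑ t, negMulLog (q (s, t)) := Fintype.sum_prod_type _
    _ ≤ ∑ s, ∑ t, (-(q (s, t) * log (a s)) + -(q (s, t) * log (b t)) + (a s * b t - q (s, t))) :=
      sum_le_sum fun s _ => sum_le_sum fun t _ => gibbs s t
    _ = ∑ s, negMulLog (a s) + ∑ t, negMulLog (b t) := by
      simp only [sum_add_distrib, hentX, hentY, hmass, add_zero]

lemma sum_filter_fst_eq {S T : Type*} [Fintype S] [Fintype T] [DecidableEq S]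
    (q : S × T → ℝ) (s : S) : ∑ st with st.1 = s, q st = ∑ t, q (s, t) := by
  rw [sum_filter, Fintype.sum_prod_type, sum_comm]
  simp

lemma sum_filter_snd_eq {S T : Type*} [Fintype S] [Fintype T] [DecidableEq T]
    (q : S × T → ℝ) (t : T) : ∑ st with st.2 = t, q st = ∑ s, q (s, t) := by
  rw [sum_filter, Fintype.sum_prod_type_right, sum_comm]
  simp

section Entropy

variable {Ω : Type*} [MeasurableSpace Ω] {μ : Measure Ω}
  {S T : Type*} [Fintype S] [MeasurableSpace S] [MeasurableSingletonClass S] {X : Ω → S} {Y : Ω → T}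

lemma ent_eq_sum_measureReal (hX : Measurable X) :
    ent μ X = ∑ s, negMulLog (μ.real (X ⁻¹' {s})) := by
  simp only [ent, measureReal_def, Measure.map_apply hX (measurableSet_singleton _)]

lemma measureReal_comp_preimage_singleton [IsFiniteMeasure μ] [DecidableEq T]
    (hX : Measurable X) (f : S → T) (t : T) :
    μ.real ((fun ω => f (X ω)) ⁻¹' {t}) = ∑ s with f s = t, μ.real (X ⁻¹' {s}) := by
  rw [sum_measureReal_preimage_singleton _ fun s _ => hX (measurableSet_singleton s)]
  congr 1
  ext ω
  simp

lemma sum_measureReal_preimage_singleton_eq_one [IsProbabilityMeasure μ] (hX : Measurable X) :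
    ∑ s, μ.real (X ⁻¹' {s}) = 1 := by
  rw [sum_measureReal_preimage_singleton _ fun s _ => hX (measurableSet_singleton s)]
  simp

lemma ent_comp_le [Fintype T] [MeasurableSpace T] [MeasurableSingletonClass T]
    [IsFiniteMeasure μ] (hX : Measurable X) (f : S → T) :
    ent μ (fun ω => f (X ω)) ≤ ent μ X := by
  classical
  have hfX : Measurable fun ω => f (X ω) := (measurable_of_finite f).comp hX
  rw [ent_eq_sum_measureReal hfX, ent_eq_sum_measureReal hX, ← sum_fiberwise univ f]
  gcongr with t
  rw [measureReal_comp_preimage_singleton hX]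
  exact negMulLog_sum_le _ fun _ _ => measureReal_nonneg

lemma ent_pair_le_add [Fintype T] [MeasurableSpace T] [MeasurableSingletonClass T]
    [IsProbabilityMeasure μ] (hX : Measurable X) (hY : Measurable Y) :
    ent μ (fun ω => (X ω, Y ω)) ≤ ent μ X + ent μ Y := by
  classical
  have hP := hX.prodMk hY
  have hmargX : ∀ s, μ.real (X ⁻¹' {s}) = ∑ t, μ.real ((fun ω => (X ω, Y ω)) ⁻¹' {(s, t)}) :=
    fun s => (measureReal_comp_preimage_singleton hP Prod.fst s).trans (sum_filter_fst_eq _ s)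
  have hmargY : ∀ t, μ.real (Y ⁻¹' {t}) = ∑ s, μ.real ((fun ω => (X ω, Y ω)) ⁻¹' {(s, t)}) :=
    fun t => (measureReal_comp_preimage_singleton hP Prod.snd t).trans (sum_filter_snd_eq _ t)
  rw [ent_eq_sum_measureReal hX, ent_eq_sum_measureReal hY, ent_eq_sum_measureReal hP]
  simp only [hmargX, hmargY]
  exact sum_negMulLog_le_add_marginals (fun _ => measureReal_nonneg)
    (sum_measureReal_preimage_singleton_eq_one hP)

end Entropy

theorem stmt_8_general
    {Ω : Type*} [MeasurableSpace Ω] (μ : Measure Ω) [IsProbabilityMeasure μ]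
    {SK S1 S3 : Type*}
    [Fintype SK] [MeasurableSpace SK] [MeasurableSingletonClass SK]
    [Fintype S1] [MeasurableSpace S1] [MeasurableSingletonClass S1]
    [Fintype S3] [MeasurableSpace S3] [MeasurableSingletonClass S3]
    (K : Ω → SK) (W₁ : Ω → S1) (W₃ : Ω → S3)
    (hK : Measurable K) (hW₁ : Measurable W₁) (hW₃ : Measurable W₃)
    (hfun : condEnt μ W₁ (fun ω => (K ω, W₃ ω)) = 0)
    (hind : mutInfo μ W₁ W₃ = 0) :
    ent μ K ≥ ent μ W₁ := by
  have hmono : ent μ (fun ω => (W₁ ω, W₃ ω)) ≤ ent μ (fun ω => (W₁ ω, (K ω, W₃ ω))) :=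
    ent_comp_le (μ := μ) (hW₁.prodMk (hK.prodMk hW₃)) fun x => (x.1, x.2.2)
  have hsub := ent_pair_le_add (μ := μ) hK hW₃
  unfold condEnt at hfun
  unfold mutInfo at hind
  linarith

theorem stmt_8
    {Ω : Type*} [MeasurableSpace Ω] (μ : Measure Ω) [IsProbabilityMeasure μ]
    {SK S1 S3 : Type*}
    [Fintype SK] [Nonempty SK] [MeasurableSpace SK] [MeasurableSingletonClass SK]
    [Fintype S1] [Nonempty S1] [MeasurableSpace S1] [MeasurableSingletonClass S1]
    [Fintype S3] [Nonempty S3] [MeasurableSpace S3] [MeasurableSingletonClass S3]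
    (K : Ω → SK) (W₁ : Ω → S1) (W₃ : Ω → S3)
    (hK : Measurable K) (hW₁ : Measurable W₁) (hW₃ : Measurable W₃)
    (hfun : condEnt μ W₁ (fun ω => (K ω, W₃ ω)) = 0)
    (hind : mutInfo μ W₁ W₃ = 0) :
    ent μ K ≥ ent μ W₁ :=
  stmt_8_general μ K W₁ W₃ hK hW₁ hW₃ hfun hind
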